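/- arXiv:2003.14085 — 7 statements merged into one kernel-verified Lean document; each statement's English description precedes it below -/
import Mathlib

section
/- For a binomial random variable Z with parameters T and 1/2, the mean absolute deviation satisfies E|Z - T/2| = (⌊T/2⌋ + 1) * C(T, ⌊T/2⌋+1) / 2^T. -/
/-!
With `f n = n * C(T, n)` one has `C(T, k) * (T - 2k) = f (k + 1) - f k`, so the partial sums of
`C(T, k) * (T - 2k)` telescope to `f n`. The full sum is `f (T + 1) = 0`, hence the terms with
`2k ≤ T` and those with `2k > T` contribute `f (⌊T/2⌋ + 1)` each to `∑ C(T, k) * |T - 2k|`.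
-/

open Finset

theorem choose_mul_sub_two_mul_eq_sub (T k : ℕ) :
    (T.choose k : ℝ) * (T - 2 * k) = ((k + 1 : ℕ) : ℝ) * T.choose (k + 1) - k * T.choose k := by
  rcases le_or_gt k T with hkT | hTk
  · have h : ((T.choose (k + 1) * (k + 1) : ℕ) : ℝ) = (T.choose k * (T - k) : ℕ) :=
      congrArg _ (Nat.choose_succ_right_eq T k)
    push_cast [Nat.cast_sub hkT] at h ⊢
    linarith
  · simp [Nat.choose_eq_zero_of_lt hTk, Nat.choose_eq_zero_of_lt (hTk.trans k.lt_succ_self)]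

theorem sum_range_choose_mul_sub_two_mul (T n : ℕ) :
    ∑ k ∈ range n, (T.choose k : ℝ) * (T - 2 * k) = n * T.choose n := by
  simp_rw [choose_mul_sub_two_mul_eq_sub]
  rw [sum_range_sub (fun k => (k : ℝ) * T.choose k), Nat.cast_zero, zero_mul, sub_zero]

theorem sum_range_choose_mul_abs_sub_two_mul (T : ℕ) :
    ∑ k ∈ range (T + 1), (T.choose k : ℝ) * |(T : ℝ) - 2 * k|
      = 2 * ((T / 2 + 1 : ℕ) * T.choose (T / 2 + 1)) := by
  set m := T / 2 + 1
  have hm : m ≤ T + 1 := by omega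
  have lower : ∑ k ∈ range m, (T.choose k : ℝ) * |(T : ℝ) - 2 * k|
      = ∑ k ∈ range m, (T.choose k : ℝ) * (T - 2 * k) := by
    refine sum_congr rfl fun k hk => ?_
    have : (2 * k : ℝ) ≤ T := by exact_mod_cast (by grind : 2 * k ≤ T)
    rw [abs_of_nonneg (by linarith)]
  have upper : ∑ k ∈ Ico m (T + 1), (T.choose k : ℝ) * |(T : ℝ) - 2 * k|
      = -∑ k ∈ Ico m (T + 1), (T.choose k : ℝ) * (T - 2 * k) := by
    rw [← sum_neg_distrib]
    refine sum_congr rfl fun k hk => ?_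
    have : (T : ℝ) ≤ 2 * k := by exact_mod_cast (by grind : T ≤ 2 * k)
    rw [abs_of_nonpos (by linarith), mul_neg]
  have total := sum_range_choose_mul_sub_two_mul T (T + 1)
  rw [Nat.choose_succ_self, Nat.cast_zero, mul_zero, ← sum_range_add_sum_Ico _ hm,
    sum_range_choose_mul_sub_two_mul] at total
  rw [← sum_range_add_sum_Ico _ hm, lower, upper, sum_range_choose_mul_sub_two_mul]
  linarith

theorem stmt_0_general (T : ℕ) :
    ∑ k ∈ Finset.range (T + 1),
        ((T.choose k : ℝ) / 2 ^ T) * |(k : ℝ) - (T : ℝ) / 2|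
      = (((T / 2 : ℕ) : ℝ) + 1) * (T.choose (T / 2 + 1) : ℝ) / 2 ^ T := by
  have term_eq : ∀ k : ℕ, ((T.choose k : ℝ) / 2 ^ T) * |(k : ℝ) - (T : ℝ) / 2|
      = (T.choose k : ℝ) * |(T : ℝ) - 2 * k| / (2 * 2 ^ T) := fun k => by
    rw [abs_sub_comm, show (T : ℝ) / 2 - k = (T - 2 * k) / 2 by ring, abs_div, abs_two]
    ring
  simp_rw [term_eq, ← sum_div, sum_range_choose_mul_abs_sub_two_mul]
  push_cast
  field_simp

/-- De Moivre's formula for the mean absolute deviation of a symmetric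
binomial random variable `Z ~ Binomial(T, 1/2)`:
`E|Z - T/2| = (⌊T/2⌋ + 1) * C(T, ⌊T/2⌋+1) / 2^T`. -/
theorem stmt_0 (T : ℕ) (hT : 0 < T) :
    ∑ k ∈ Finset.range (T + 1),
        ((T.choose k : ℝ) / 2 ^ T) * |(k : ℝ) - (T : ℝ) / 2|
      = (((T / 2 : ℕ) : ℝ) + 1) * (T.choose (T / 2 + 1) : ℝ) / 2 ^ T :=
  stmt_0_general T
end

section
/- Let X be a nonnegative random variable with finite variance and E[X] > 0. Then E[sqrt(X)] ≥ sqrt(E[X]) * (1 - Var(X) / (2 (E[X])^2)). -/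
open MeasureTheory

/-! The function `t ↦ (3t - t²)/2` agrees with `√t` to second order at `t = 1` and stays below it
on `[0, ∞)`. Applying this to `X / E[X]` and integrating bounds `E[√X]` from below by
`√E[X] (3 - E[X²] / E[X]²) / 2`. -/

namespace Real

/-- With `s = √t`, the difference is `s (s - 1)² (s + 2) / 2`. -/
theorem three_mul_sub_sq_div_two_le_sqrt {t : ℝ} (ht : 0 ≤ t) : (3 * t - t ^ 2) / 2 ≤ √t := by
  obtain ⟨s, hs, rfl⟩ : ∃ s, 0 ≤ s ∧ s ^ 2 = t := ⟨√t, sqrt_nonneg t, sq_sqrt ht⟩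
  rw [sqrt_sq hs]
  nlinarith [mul_nonneg (mul_nonneg hs (sq_nonneg (s - 1))) (by linarith : 0 ≤ s + 2)]

theorem sqrt_mul_three_mul_sub_sq_div_two_le_sqrt {x : ℝ} (hx : 0 ≤ x) (m : ℝ) :
    √m * ((3 * (x / m) - (x / m) ^ 2) / 2) ≤ √x := by
  rcases le_or_gt m 0 with hm | hm
  · rw [sqrt_eq_zero'.2 hm, zero_mul]
    exact sqrt_nonneg x
  · calc √m * ((3 * (x / m) - (x / m) ^ 2) / 2)
        ≤ √m * √(x / m) :=
          mul_le_mul_of_nonneg_left (three_mul_sub_sq_div_two_le_sqrt (by positivity))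
            (sqrt_nonneg m)
      _ = √x := by rw [← sqrt_mul hm.le, mul_div_cancel₀ x hm.ne']

end Real

namespace MeasureTheory

variable {Ω : Type*} [MeasurableSpace Ω] {μ : Measure Ω} {X : Ω → ℝ}

theorem Integrable.sqrt [IsFiniteMeasure μ] (hX : ∀ ω, 0 ≤ X ω) (hX1 : Integrable X μ) :
    Integrable (fun ω => √(X ω)) μ := by
  have hmeas : AEStronglyMeasurable (fun ω => √(X ω)) μ :=
    Real.continuous_sqrt.comp_aestronglyMeasurable hX1.1
  refine ((memLp_two_iff_integrable_sq hmeas).2 ?_).integrable one_le_two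
  simpa only [Real.sq_sqrt (hX _)] using hX1

theorem sqrt_mul_moments_le_integral_sqrt [IsFiniteMeasure μ] (hX : ∀ ω, 0 ≤ X ω)
    (hX1 : Integrable X μ) (hX2 : Integrable (fun ω => X ω ^ 2) μ) (m : ℝ) :
    √m * ((3 * (∫ ω, X ω ∂μ) / m - (∫ ω, X ω ^ 2 ∂μ) / m ^ 2) / 2) ≤ ∫ ω, √(X ω) ∂μ := by
  have hlin : Integrable (fun ω => 3 * (X ω / m)) μ := (hX1.div_const m).const_mul 3
  have hsq : Integrable (fun ω => (X ω / m) ^ 2) μ := by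
    simpa only [div_pow] using hX2.div_const (m ^ 2)
  calc √m * ((3 * (∫ ω, X ω ∂μ) / m - (∫ ω, X ω ^ 2 ∂μ) / m ^ 2) / 2)
      = ∫ ω, √m * ((3 * (X ω / m) - (X ω / m) ^ 2) / 2) ∂μ := by
        rw [integral_const_mul, integral_div, integral_sub hlin hsq]
        simp only [integral_const_mul, integral_div, div_pow, mul_div_assoc]
    _ ≤ ∫ ω, √(X ω) ∂μ :=
        integral_mono (((hlin.sub hsq).div_const 2).const_mul _) (hX1.sqrt hX) fun ω =>
          Real.sqrt_mul_three_mul_sub_sq_div_two_le_sqrt (hX ω) m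

end MeasureTheory

/-- For a nonnegative random variable `X` with finite variance and `E[X] > 0`,
`E[√X] ≥ √(E[X]) (1 - Var(X) / (2 E[X]^2))`, where `Var(X) = E[X²] - (E[X])²`. -/
theorem stmt_3 {Ω : Type*} [MeasurableSpace Ω] (μ : Measure Ω) [IsProbabilityMeasure μ]
    (X : Ω → ℝ) (hXnn : ∀ ω, 0 ≤ X ω)
    (hX1 : Integrable X μ) (hX2 : Integrable (fun ω => X ω ^ 2) μ)
    (hpos : 0 < ∫ ω, X ω ∂μ) :
    ∫ ω, Real.sqrt (X ω) ∂μ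
      ≥ Real.sqrt (∫ ω, X ω ∂μ) *
          (1 - ((∫ ω, X ω ^ 2 ∂μ) - (∫ ω, X ω ∂μ) ^ 2) /
              (2 * (∫ ω, X ω ∂μ) ^ 2)) := by
  have h := sqrt_mul_moments_le_integral_sqrt hXnn hX1 hX2 (∫ ω, X ω ∂μ)
  convert h using 2
  field_simp
  ring
end

section
/- Let X ~ Binomial(T, 1/C) with T, C positive integers and C ≥ 1. Then E[sqrt(X)] ≥ sqrt(T/C) - (1/2) * sqrt(C/T). -/
/-! Taking expectations in the pointwise bound
`√x ≥ √μ + (x - μ) / (2√μ) - (x - μ)² / (2μ√μ)` at `μ = E[X]` gives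
`E[√X] ≥ √μ - Var(X) / (2μ√μ)`, and for `X ~ Binomial(T, 1/C)` one has `Var(X) = μ(1 - 1/C) ≤ μ`.
The binomial probabilities are the Bernstein polynomials evaluated at `1/C`, whose first two
moments are known. -/

open Finset Polynomial

theorem Real.sqrt_add_sub_sq_le_sqrt {μ x : ℝ} (hμ : 0 < μ) (hx : 0 ≤ x) :
    √μ + (x - μ) / (2 * √μ) - (x - μ) ^ 2 / (2 * μ * √μ) ≤ √x := by
  obtain ⟨s, hs, rfl⟩ : ∃ s, 0 ≤ s ∧ s ^ 2 = x := ⟨√x, Real.sqrt_nonneg x, Real.sq_sqrt hx⟩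
  obtain ⟨m, hm, rfl⟩ : ∃ m, 0 < m ∧ m ^ 2 = μ := ⟨√μ, Real.sqrt_pos.2 hμ, Real.sq_sqrt hμ.le⟩
  rw [Real.sqrt_sq hs, Real.sqrt_sq hm.le, ← sub_nonneg]
  have gap : s - (m + (s ^ 2 - m ^ 2) / (2 * m) - (s ^ 2 - m ^ 2) ^ 2 / (2 * m ^ 2 * m))
      = (s - m) ^ 2 * (s * (s + 2 * m)) / (2 * m ^ 3) := by
    field_simp
    ring
  rw [gap]
  positivity

theorem Finset.sqrt_sub_sum_mul_sq_le_sum_mul_sqrt {ι : Type*} (s : Finset ι) (w x : ι → ℝ)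
    {μ : ℝ} (hw : ∀ i ∈ s, 0 ≤ w i) (hw1 : ∑ i ∈ s, w i = 1) (hx : ∀ i ∈ s, 0 ≤ x i)
    (hmean : ∑ i ∈ s, w i * x i = μ) (hμ : 0 < μ) :
    √μ - (∑ i ∈ s, w i * (x i - μ) ^ 2) / (2 * μ * √μ) ≤ ∑ i ∈ s, w i * √(x i) := by
  have hm : 0 < √μ := Real.sqrt_pos.2 hμ
  calc √μ - (∑ i ∈ s, w i * (x i - μ) ^ 2) / (2 * μ * √μ)
      = ∑ i ∈ s, w i * (√μ + (x i - μ) / (2 * √μ) - (x i - μ) ^ 2 / (2 * μ * √μ)) := by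
        have expand : ∀ i, w i * (√μ + (x i - μ) / (2 * √μ) - (x i - μ) ^ 2 / (2 * μ * √μ))
            = √μ * w i + (w i * x i - μ * w i) / (2 * √μ)
              - w i * (x i - μ) ^ 2 / (2 * μ * √μ) := fun i => by ring
        simp only [expand, sum_add_distrib, sum_sub_distrib, ← sum_div, ← mul_sum, hw1, hmean]
        ring
    _ ≤ ∑ i ∈ s, w i * √(x i) :=
        sum_le_sum fun i hi => mul_le_mul_of_nonneg_left
          (Real.sqrt_add_sub_sq_le_sqrt hμ (hx i hi)) (hw i hi)

theorem bernsteinPolynomial.eval_eq (n k : ℕ) (p : ℝ) :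
    (bernsteinPolynomial ℝ n k).eval p = n.choose k * p ^ k * (1 - p) ^ (n - k) := by
  simp [bernsteinPolynomial]

theorem bernsteinPolynomial.sum_eval (n : ℕ) (p : ℝ) :
    ∑ k ∈ range (n + 1), (bernsteinPolynomial ℝ n k).eval p = 1 := by
  simpa [eval_finsetSum] using congrArg (eval p) (bernsteinPolynomial.sum ℝ n)

theorem bernsteinPolynomial.sum_eval_mul (n : ℕ) (p : ℝ) :
    ∑ k ∈ range (n + 1), (bernsteinPolynomial ℝ n k).eval p * k = n * p := by
  simpa [eval_finsetSum, mul_comm] using congrArg (eval p) (bernsteinPolynomial.sum_smul ℝ n)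

theorem bernsteinPolynomial.sum_eval_mul_sq (n : ℕ) (p : ℝ) :
    ∑ k ∈ range (n + 1), (bernsteinPolynomial ℝ n k).eval p * (k - n * p) ^ 2
      = n * p * (1 - p) := by
  have variance := congrArg (eval p) (bernsteinPolynomial.variance ℝ n)
  simp only [eval_finsetSum, eval_mul, eval_pow, eval_sub, eval_X, eval_natCast,
    eval_one, nsmul_eq_mul] at variance
  rw [← variance]
  exact sum_congr rfl fun k _ => by ring

theorem bernsteinPolynomial.eval_nonneg (n k : ℕ) {p : ℝ} (hp0 : 0 ≤ p) (hp1 : p ≤ 1) :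
    0 ≤ (bernsteinPolynomial ℝ n k).eval p := by
  rw [eval_eq]
  have : 0 ≤ 1 - p := sub_nonneg.2 hp1
  positivity

/-- For `X ~ Binomial(T, 1/C)` with `T, C` positive integers,
`E[√X] ≥ √(T/C) - (1/2)√(C/T)`. -/
theorem stmt_4 (T C : ℕ) (hT : 0 < T) (hC : 1 ≤ C) :
    ∑ k ∈ Finset.range (T + 1),
        (T.choose k : ℝ) * (1 / (C : ℝ)) ^ k * (1 - 1 / (C : ℝ)) ^ (T - k) *
          Real.sqrt k
      ≥ Real.sqrt ((T : ℝ) / C) - (1 / 2) * Real.sqrt ((C : ℝ) / T) := by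
  set p : ℝ := 1 / C
  have hp0 : 0 ≤ p := by positivity
  have hp1 : p ≤ 1 := div_le_one_of_le₀ (by exact_mod_cast hC) (Nat.cast_nonneg C)
  have hμ : 0 < (T : ℝ) / C := by positivity
  have bound := (range (T + 1)).sqrt_sub_sum_mul_sq_le_sum_mul_sqrt
    (fun k => (bernsteinPolynomial ℝ T k).eval p) (fun k => k)
    (fun k _ => bernsteinPolynomial.eval_nonneg T k hp0 hp1) (bernsteinPolynomial.sum_eval T p)
    (fun k _ => Nat.cast_nonneg k) (by rw [bernsteinPolynomial.sum_eval_mul, mul_one_div]) hμ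
  have hμ_eq : (T : ℝ) / C = T * p := (mul_one_div _ _).symm
  rw [hμ_eq, bernsteinPolynomial.sum_eval_mul_sq, ← hμ_eq] at bound
  simp only [bernsteinPolynomial.eval_eq] at bound
  calc √((T : ℝ) / C) - 1 / 2 * √((C : ℝ) / T)
      = √((T : ℝ) / C) - (T / C) / (2 * (T / C) * √((T : ℝ) / C)) := by
        rw [← inv_div, Real.sqrt_inv]
        field_simp
    _ ≤ √((T : ℝ) / C) - (T / C) * (1 - p) / (2 * (T / C) * √((T : ℝ) / C)) := by
        gcongr
        exact mul_le_of_le_one_right hμ.le (by linarith)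
    _ ≤ _ := bound
end

section
/- Let X ~ Binomial(T, 1/C) with T, C positive integers. Then E[ 1{X > 0} / sqrt(X) ] ≤ sqrt(2C/T) + 4C/T. -/
/-!
Evaluated at `p ∈ [0, 1]`, the Bernstein polynomials `n.choose ν * X ^ ν * (1 - X) ^ (n - ν)` are
the probabilities of the binomial law `B(n, p)`, so Mathlib's identities for them give its total
mass and its variance `n p (1 - p)`. With mean `m = n p`, the pointwise bound
`1{k > 0} / √k ≤ 1{k ≤ m / 2} + √(2 / m)` and Chebyshev's inequality
`P(X ≤ m / 2) ≤ n p (1 - p) / (m / 2) ^ 2 = 4 (1 - p) / m` give the estimate; `p = 1 / C` is the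
theorem.
-/

open Finset Polynomial

lemma ite_le_sq_sub_div_sq {m : ℝ} (hm : 0 < m) (x : ℝ) :
    (if x ≤ m / 2 then 1 else 0) ≤ (m - x) ^ 2 / (m / 2) ^ 2 := by
  split_ifs with hx
  · rw [le_div_iff₀ (by positivity), one_mul]
    gcongr
    linarith
  · positivity

lemma ite_one_div_sqrt_le_ite_add_sqrt {m : ℝ} (hm : 0 < m) (k : ℕ) :
    (if 0 < k then 1 / √k else 0) ≤ (if (k : ℝ) ≤ m / 2 then 1 else 0) + √(2 / m) := by
  rcases Nat.eq_zero_or_pos k with rfl | hk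
  · simp only [lt_irrefl, if_false]
    positivity
  have hk₁ : (1 : ℝ) ≤ k := by exact_mod_cast hk
  rw [if_pos hk]
  split_ifs with hkm
  · have : 1 / √k ≤ 1 := by
      rw [div_le_one (by positivity), Real.one_le_sqrt]
      exact hk₁
    linarith [Real.sqrt_nonneg (2 / m)]
  · have : 1 / √k ≤ √(2 / m) := by
      rw [← Real.sqrt_one, ← Real.sqrt_div' _ (by positivity)]
      apply Real.sqrt_le_sqrt
      rw [div_le_div_iff₀ (by positivity) hm]
      linarith
    linarith

namespace bernsteinPolynomial

variable {n : ℕ} {p : ℝ}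

lemma eval_nonneg_s5 (hp₀ : 0 ≤ p) (hp₁ : p ≤ 1) (ν : ℕ) :
    0 ≤ (bernsteinPolynomial ℝ n ν).eval p := by
  have : 0 ≤ 1 - p := sub_nonneg.2 hp₁
  simp only [bernsteinPolynomial, eval_mul, eval_pow, eval_sub, eval_one, eval_X, eval_natCast]
  positivity

lemma sum_eval_s5 (n : ℕ) (p : ℝ) :
    ∑ ν ∈ range (n + 1), (bernsteinPolynomial ℝ n ν).eval p = 1 := by
  simpa [eval_finsetSum] using congrArg (eval p) (bernsteinPolynomial.sum ℝ n)

lemma sum_sq_sub_mul_eval (n : ℕ) (p : ℝ) :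
    ∑ ν ∈ range (n + 1), ((n : ℝ) * p - ν) ^ 2 * (bernsteinPolynomial ℝ n ν).eval p =
      n * p * (1 - p) := by
  simpa [eval_finsetSum] using congrArg (eval p) (bernsteinPolynomial.variance ℝ n)

lemma sum_eval_mul_ite_le_half_mean (hp₀ : 0 ≤ p) (hp₁ : p ≤ 1) (hm : 0 < n * p) :
    ∑ ν ∈ range (n + 1),
        (bernsteinPolynomial ℝ n ν).eval p * (if (ν : ℝ) ≤ n * p / 2 then 1 else 0)
      ≤ 4 * (1 - p) / (n * p) := by
  calc _ ≤ ∑ ν ∈ range (n + 1),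
          (bernsteinPolynomial ℝ n ν).eval p * (((n : ℝ) * p - ν) ^ 2 / (n * p / 2) ^ 2) := by
        gcongr with ν
        · exact eval_nonneg_s5 hp₀ hp₁ ν
        · exact ite_le_sq_sub_div_sq hm ν
    _ = n * p * (1 - p) / (n * p / 2) ^ 2 := by
        rw [← sum_sq_sub_mul_eval, sum_div]
        congr! 1 with ν
        ring
    _ = 4 * (1 - p) / (n * p) := by
        field_simp
        ring

theorem sum_eval_mul_inv_sqrt_le (hp₀ : 0 ≤ p) (hp₁ : p ≤ 1) (hm : 0 < n * p) :
    ∑ ν ∈ range (n + 1), (bernsteinPolynomial ℝ n ν).eval p * (if 0 < ν then 1 / √ν else 0)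
      ≤ √(2 / (n * p)) + 4 * (1 - p) / (n * p) := by
  calc _ ≤ ∑ ν ∈ range (n + 1), (bernsteinPolynomial ℝ n ν).eval p *
          ((if (ν : ℝ) ≤ n * p / 2 then 1 else 0) + √(2 / (n * p))) := by
        gcongr with ν
        · exact eval_nonneg_s5 hp₀ hp₁ ν
        · exact ite_one_div_sqrt_le_ite_add_sqrt hm ν
    _ = ∑ ν ∈ range (n + 1),
          (bernsteinPolynomial ℝ n ν).eval p * (if (ν : ℝ) ≤ n * p / 2 then 1 else 0)
          + √(2 / (n * p)) := by
        simp only [mul_add, sum_add_distrib, ← sum_mul, sum_eval_s5, one_mul]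
    _ ≤ _ := by
        linarith [sum_eval_mul_ite_le_half_mean hp₀ hp₁ hm]

end bernsteinPolynomial

/-- For `X ~ Binomial(T, 1/C)` with `T, C` positive integers,
`E[ 1{X > 0} / √X ] ≤ √(2C/T) + 4C/T`. -/
theorem stmt_5 (T C : ℕ) (hT : 0 < T) (hC : 0 < C) :
    ∑ k ∈ Finset.range (T + 1),
        (T.choose k : ℝ) * (1 / (C : ℝ)) ^ k * (1 - 1 / (C : ℝ)) ^ (T - k) *
          (if 0 < k then 1 / Real.sqrt k else 0)
      ≤ Real.sqrt (2 * (C : ℝ) / T) + 4 * (C : ℝ) / T := by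
  have hC₁ : (1 : ℝ) ≤ C := by exact_mod_cast hC
  have hm : 0 < (T : ℝ) * (1 / C) := by positivity
  have hmean : (T : ℝ) * (1 / C) = T / C := by ring
  calc _ = ∑ k ∈ range (T + 1),
          (bernsteinPolynomial ℝ T k).eval (1 / (C : ℝ)) * (if 0 < k then 1 / √k else 0) := by
        simp only [bernsteinPolynomial, eval_mul, eval_pow, eval_sub, eval_one, eval_X,
          eval_natCast]
    _ ≤ √(2 / (T * (1 / C))) + 4 * (1 - 1 / C) / (T * (1 / C)) :=
        bernsteinPolynomial.sum_eval_mul_inv_sqrt_le (by positivity)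
          (div_le_one_of_le₀ hC₁ (by positivity)) hm
    _ ≤ √(2 * C / T) + 4 * C / T := by
        have hvar : 4 * (1 - 1 / (C : ℝ)) / (T / C) ≤ 4 * C / T := by
          rw [div_le_div_iff₀ (by positivity) (by positivity)]
          field_simp
          nlinarith
        rw [hmean, div_div_eq_mul_div]
        gcongr
end

section
/- Let Z ~ Binomial(T, 1/2) for an even positive integer T. Then E|Z - T/2| ≥ sqrt(T/(2π)) - 1/(3 sqrt(2πT)). -/
/-!
De Moivre: for `T = 2m` the mean absolute deviation of `Binomial(2m, 1/2)` is `m·C(2m, m)/4^m`,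
because `(m - k)·C(2m, k)` telescopes. Writing `C(2m, m)/4^m` through the Stirling sequence
`s n = n! / (√(2n) (n/e)^n)` as `s(2m) / (s(m)² √m)`, the bounds `√π ≤ s n ≤ √π e^{1/(12n)}`
(the upper one from Robbins' stepwise estimate) give `C(2m, m)/4^m ≥ e^{-1/(6m)}/√(πm)`,
and `e^{-x} ≥ 1 - x` finishes.
-/

open Finset Real

theorem sum_range_sub_two_mul_mul_choose {R : Type*} [CommRing R] (n j : ℕ) :
    ∑ k ∈ range j, ((n : R) - 2 * k) * n.choose k = j * n.choose j := by
  induction j with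
  | zero => simp
  | succ j ih =>
    have pascal : ((n + 1).choose (j + 1) : R) = n.choose j + n.choose (j + 1) := by
      rw [Nat.choose_succ_succ', Nat.cast_add]
    have absorb := congrArg (Nat.cast : ℕ → R) (Nat.add_one_mul_choose_eq n j)
    rw [sum_range_succ, ih]
    push_cast at absorb ⊢
    linear_combination absorb + (j + 1 : R) * pascal

theorem sum_choose_mul_abs_sub_eq_mul_centralBinom (m : ℕ) :
    ∑ k ∈ range (2 * m + 1), ((2 * m).choose k : ℝ) * |(k : ℝ) - m|
      = m * m.centralBinom := by
  have lower := sum_range_sub_two_mul_mul_choose (R := ℝ) (2 * m) m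
  have total := sum_range_sub_two_mul_mul_choose (R := ℝ) (2 * m) (2 * m + 1)
  rw [Nat.choose_eq_zero_of_lt (by omega), Nat.cast_zero, mul_zero,
    ← sum_range_add_sum_Ico _ (by omega : m ≤ 2 * m + 1)] at total
  have below : ∀ k ∈ range m, ((2 * m).choose k : ℝ) * |(k : ℝ) - m|
      = (((2 * m : ℕ) : ℝ) - 2 * k) * (2 * m).choose k / 2 := by
    intro k hk
    have : (k : ℝ) ≤ m := by exact_mod_cast (mem_range.mp hk).le
    rw [abs_of_nonpos (by linarith)]; push_cast; ring
  have above : ∀ k ∈ Ico m (2 * m + 1), ((2 * m).choose k : ℝ) * |(k : ℝ) - m|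
      = -((((2 * m : ℕ) : ℝ) - 2 * k) * (2 * m).choose k / 2) := by
    intro k hk
    have : (m : ℝ) ≤ k := by exact_mod_cast (mem_Ico.mp hk).1
    rw [abs_of_nonneg (by linarith)]; push_cast; ring
  rw [← sum_range_add_sum_Ico _ (by omega : m ≤ 2 * m + 1), sum_congr rfl below,
    sum_congr rfl above, sum_neg_distrib, ← sum_div, ← sum_div,
    Nat.centralBinom_eq_two_mul_choose]
  linear_combination lower - total / 2

namespace Stirling

open Filter Topology

theorem stirlingSeq_le_sqrt_pi_mul_exp {n : ℕ} (hn : n ≠ 0) :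
    stirlingSeq n ≤ √π * exp (1 / (12 * n)) := by
  obtain ⟨n, rfl⟩ := Nat.exists_eq_succ_of_ne_zero hn
  set f : ℕ → ℝ := fun k ↦ log (stirlingSeq (k + 1)) - 1 / (12 * (k + 1 : ℕ))
  -- Robbins' stepwise bound makes `log stirlingSeq - 1/(12 n)` increase to `log √π`.
  have f_mono : Monotone f := monotone_nat_of_le_succ fun k ↦ by
    have := log_stirlingSeq_sdiff_le (k + 1)
    simp only [f]
    push_cast at this ⊢
    have partial_fractions : (1 : ℝ) / (12 * (k + 1) * (k + 1 + 1))
        = 1 / (12 * (k + 1)) - 1 / (12 * (k + 1 + 1)) := by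
      field_simp; ring
    linarith
  have f_lim : Tendsto f atTop (𝓝 (log √π - 0)) := by
    refine ((tendsto_stirlingSeq_sqrt_pi.comp (tendsto_add_atTop_nat 1)).log
      (sqrt_pos.mpr pi_pos).ne').sub ?_
    exact tendsto_const_nhds.div_atTop <| (tendsto_natCast_atTop_atTop.comp
      (tendsto_add_atTop_nat 1)).const_mul_atTop (by norm_num)
  have := f_mono.ge_of_tendsto f_lim n
  simp only [f, sub_zero] at this
  rw [← exp_log (sqrt_pos.mpr pi_pos), ← exp_add, ← log_le_iff_le_exp (stirlingSeq'_pos n)]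
  linarith

open scoped Nat

theorem centralBinom_div_four_pow_eq {n : ℕ} (hn : n ≠ 0) :
    (n.centralBinom : ℝ) / 4 ^ n = stirlingSeq (2 * n) / (stirlingSeq n ^ 2 * √n) := by
  have hfac : (n.centralBinom : ℝ) * n ! * n ! = (2 * n)! := by
    have := Nat.choose_mul_factorial_mul_factorial (n := 2 * n) (k := n) (by omega)
    rw [show 2 * n - n = n by omega, ← Nat.centralBinom_eq_two_mul_choose] at this
    exact_mod_cast this
  have hpos : (0 : ℝ) < n := by positivity
  have h4 : √(2 * (2 * n : ℕ) : ℝ) = 2 * √n := by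
    rw [show (2 * (2 * n : ℕ) : ℝ) = 2 ^ 2 * n by push_cast; ring, sqrt_mul (by positivity),
      sqrt_sq (by norm_num)]
  have hpow : ((2 * n : ℕ) / exp 1 : ℝ) ^ (2 * n) = 4 ^ n * ((n / exp 1) ^ n) ^ 2 := by
    rw [Nat.cast_mul, mul_div_assoc, mul_pow, pow_mul, pow_mul']
    norm_num
  simp only [stirlingSeq]
  rw [h4, hpow, ← hfac]
  have hsq : √(2 * n : ℝ) ^ 2 = 2 * n := sq_sqrt (by positivity)
  have hsqrt : √(n : ℝ) ^ 2 = n := sq_sqrt hpos.le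
  field_simp
  rw [hsq, hsqrt]
  ring

theorem exp_neg_div_sqrt_le_centralBinom_div_four_pow {n : ℕ} (hn : n ≠ 0) :
    exp (-(1 / (6 * n))) / √(π * n) ≤ n.centralBinom / 4 ^ n := by
  have hpos : 0 < stirlingSeq n := by
    obtain ⟨k, rfl⟩ := Nat.exists_eq_succ_of_ne_zero hn
    exact stirlingSeq'_pos k
  have hsq : stirlingSeq n ^ 2 ≤ π * exp (1 / (6 * n)) := by
    calc stirlingSeq n ^ 2 ≤ (√π * exp (1 / (12 * n))) ^ 2 := by
          gcongr; exact stirlingSeq_le_sqrt_pi_mul_exp hn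
      _ = π * exp (1 / (6 * n)) := by
          rw [mul_pow, sq_sqrt pi_pos.le, ← exp_nat_mul]; ring_nf
  calc exp (-(1 / (6 * n))) / √(π * n) = √π / (π * exp (1 / (6 * n)) * √n) := by
        rw [exp_neg, sqrt_mul pi_pos.le]
        field_simp
        rw [sq_sqrt pi_pos.le]
    _ ≤ stirlingSeq (2 * n) / (stirlingSeq n ^ 2 * √n) := by
        have lower := sqrt_pi_le_stirlingSeq (n := 2 * n) (by omega)
        gcongr
        exact (sqrt_nonneg π).trans lower
    _ = n.centralBinom / 4 ^ n := (centralBinom_div_four_pow_eq hn).symm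

theorem sqrt_div_pi_sub_le_mul_centralBinom_div_four_pow {n : ℕ} (hn : n ≠ 0) :
    √(n / π) - 1 / (6 * √(π * n)) ≤ n * (n.centralBinom / 4 ^ n) := by
  have hexp : 1 - 1 / (6 * n) ≤ exp (-(1 / (6 * n))) := by
    linarith [add_one_le_exp (-(1 / (6 * (n : ℝ))))]
  have hn' : (0 : ℝ) < n := by positivity
  calc √(n / π) - 1 / (6 * √(π * n)) = n * ((1 - 1 / (6 * n)) / √(π * n)) := by
        rw [sqrt_div hn'.le, sqrt_mul pi_pos.le]
        field_simp
        rw [sq_sqrt hn'.le]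
        ring
    _ ≤ n * (exp (-(1 / (6 * n))) / √(π * n)) := by gcongr
    _ ≤ n * (n.centralBinom / 4 ^ n) := by
        gcongr n * ?_
        exact exp_neg_div_sqrt_le_centralBinom_div_four_pow hn

end Stirling

/-- For `Z ~ Binomial(T, 1/2)` with `T` an even positive integer,
`E|Z - T/2| ≥ √(T/(2π)) - 1/(3√(2πT))`. -/
theorem stmt_7 (T : ℕ) (hT : 0 < T) (hTeven : Even T) :
    ∑ k ∈ Finset.range (T + 1),
        ((T.choose k : ℝ) / 2 ^ T) * |(k : ℝ) - (T : ℝ) / 2|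
      ≥ Real.sqrt ((T : ℝ) / (2 * π)) - 1 / (3 * Real.sqrt (2 * π * T)) := by
  obtain ⟨m, rfl⟩ := hTeven
  have hm : m ≠ 0 := by omega
  rw [← two_mul]
  have mean_abs_dev : ∑ k ∈ range (2 * m + 1),
      ((2 * m).choose k : ℝ) / 2 ^ (2 * m) * |(k : ℝ) - (2 * m : ℕ) / 2|
      = m * (m.centralBinom / 4 ^ m) := by
    rw [← mul_div_assoc, ← sum_choose_mul_abs_sub_eq_mul_centralBinom, sum_div, pow_mul]
    refine sum_congr rfl fun k _ ↦ ?_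
    push_cast
    ring_nf
  have sqrt_left : √((2 * m : ℕ) / (2 * π)) = √(m / π) := by
    push_cast
    rw [mul_div_mul_left _ _ two_ne_zero]
  have sqrt_right : 3 * √(2 * π * (2 * m : ℕ)) = 6 * √(π * m) := by
    rw [show 2 * π * (2 * m : ℕ) = 2 ^ 2 * (π * m) by push_cast; ring, sqrt_mul (by positivity),
      sqrt_sq zero_le_two]
    ring
  rw [mean_abs_dev, sqrt_left, sqrt_right]
  exact Stirling.sqrt_div_pi_sub_le_mul_centralBinom_div_four_pow hm
end

section
/- Let Z ~ Binomial(T, 1/2) for any positive integer T. Then E|Z - T/2| ≥ sqrt(T/(2π)) - 1/(2 sqrt(2πT)). -/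
/-!
De Moivre's formula `E|Z - T/2| = T · C(T-1, ⌊T/2⌋) / 2^T` follows by splitting the sum at
`T/2` and telescoping with `C(T,k) (2k - T) = T (C(T-1,k-1) - C(T-1,k))`. Wallis' inequality
`W m ≤ π/2` reads `2 · 16^m ≤ π (2m+1) C(2m,m)²`; in either parity of `T` it gives
`T² ≤ 2π (T+1) E²` for the mean absolute deviation `E`, and this implies the bound because
`(T+1)(2T-1)² = 4T³ - 3T + 1 ≤ 4T³`.
-/

open Finset Real

open Nat in
theorem two_mul_sixteen_pow_le_pi_mul_centralBinom_sq (m : ℕ) :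
    2 * 16 ^ m ≤ π * (2 * m + 1) * (m.centralBinom : ℝ) ^ 2 := by
  have hW := Real.Wallis.W_le m
  have hfac : ((2 * m)! : ℝ) = m.centralBinom * m ! * m ! := by
    have := choose_mul_factorial_mul_factorial (show m ≤ 2 * m by omega)
    rw [show 2 * m - m = m by omega, ← centralBinom_eq_two_mul_choose] at this
    exact_mod_cast this.symm
  rw [Real.Wallis.W_eq_factorial_ratio, div_le_iff₀ (by positivity), hfac, pow_mul] at hW
  have hm : (0 : ℝ) < (m ! : ℝ) ^ 4 := by positivity
  nlinarith

theorem choose_succ_succ_mul_two_mul_sub (n k : ℕ) :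
    ((n + 1).choose (k + 1) : ℝ) * (2 * (k + 1 : ℕ) - (n + 1)) =
      (n + 1) * (n.choose k - n.choose (k + 1)) := by
  have hmul : ((n + 1 : ℕ) : ℝ) * n.choose k = (n + 1).choose (k + 1) * (k + 1 : ℕ) := by
    exact_mod_cast Nat.add_one_mul_choose_eq n k
  have hpascal : ((n + 1).choose (k + 1) : ℝ) = n.choose k + n.choose (k + 1) := by
    exact_mod_cast Nat.choose_succ_succ n k
  push_cast at hmul ⊢
  linear_combination -2 * hmul - (n + 1) * hpascal

theorem sum_range_choose_mul_two_mul_sub (n c : ℕ) :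
    ∑ k ∈ range (c + 1), ((n + 1).choose k : ℝ) * (2 * k - (n + 1)) =
      -((n + 1) * n.choose c) := by
  induction c with
  | zero => simp
  | succ c ih => rw [sum_range_succ, ih, choose_succ_succ_mul_two_mul_sub]; ring

theorem sum_range_choose_mul_abs_two_mul_sub (n : ℕ) :
    ∑ k ∈ range (n + 2), ((n + 1).choose k : ℝ) * |2 * (k : ℝ) - (n + 1)| =
      2 * (n + 1) * n.choose ((n + 1) / 2) := by
  set c := (n + 1) / 2
  have hc : c + 1 ≤ n + 2 := by omega
  have htotal := sum_range_choose_mul_two_mul_sub n (n + 1)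
  rw [Nat.choose_succ_self, ← sum_range_add_sum_Ico _ hc] at htotal
  have hlowsum := sum_range_choose_mul_two_mul_sub n c
  rw [← sum_range_add_sum_Ico _ hc]
  have hlow : ∀ k ∈ range (c + 1), ((n + 1).choose k : ℝ) * |2 * (k : ℝ) - (n + 1)| =
      -(((n + 1).choose k : ℝ) * (2 * k - (n + 1))) := by
    intro k hk
    have : (2 * k : ℝ) ≤ n + 1 := by
      exact_mod_cast (show 2 * k ≤ n + 1 by simp at hk; omega)
    rw [abs_of_nonpos (by linarith)]; ring
  have hhigh : ∀ k ∈ Ico (c + 1) (n + 2), ((n + 1).choose k : ℝ) * |2 * (k : ℝ) - (n + 1)| =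
      ((n + 1).choose k : ℝ) * (2 * k - (n + 1)) := by
    intro k hk
    have : (n + 1 : ℝ) ≤ 2 * k := by
      exact_mod_cast (show n + 1 ≤ 2 * k by simp at hk; omega)
    rw [abs_of_nonneg (by linarith)]
  rw [sum_congr rfl hlow, sum_congr rfl hhigh, sum_neg_distrib]
  push_cast at htotal
  linarith

theorem sum_choose_div_mul_abs_sub_half (T : ℕ) :
    ∑ k ∈ range (T + 1), ((T.choose k : ℝ) / 2 ^ T) * |(k : ℝ) - (T : ℝ) / 2| =
      T * (T - 1).choose (T / 2) / 2 ^ T := by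
  rcases T with _ | n
  · simp
  have hterm : ∀ k ∈ range (n + 2),
      ((n + 1).choose k : ℝ) / 2 ^ (n + 1) * |(k : ℝ) - (n + 1 : ℕ) / 2| =
        ((n + 1).choose k : ℝ) * |2 * (k : ℝ) - (n + 1)| / 2 ^ (n + 2) := by
    intro k _
    rw [show (k : ℝ) - (n + 1 : ℕ) / 2 = (2 * k - (n + 1)) / 2 by push_cast; ring, abs_div,
      abs_two, pow_succ]
    ring
  rw [sum_congr rfl hterm, ← sum_div, sum_range_choose_mul_abs_two_mul_sub, pow_succ,
    Nat.add_sub_cancel]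
  push_cast
  ring

theorem sq_le_two_pi_mul_succ_mul_sq_mul_choose_half (T : ℕ) :
    (T : ℝ) ^ 2 ≤ 2 * π * (T + 1) * (T * (T - 1).choose (T / 2) / 2 ^ T) ^ 2 := by
  obtain ⟨m, rfl | rfl⟩ := Nat.even_or_odd' T
  · rcases m with _ | p
    · simp
    have hwallis := two_mul_sixteen_pow_le_pi_mul_centralBinom_sq (p + 1)
    have hchoose : ((p + 1).centralBinom : ℝ) = 2 * (2 * p + 1).choose (p + 1) := by
      rw [Nat.centralBinom_eq_two_mul_choose, show 2 * (p + 1) = 2 * p + 1 + 1 by ring,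
        Nat.choose_succ_succ, Nat.choose_symm_half]
      push_cast; ring
    have h16 : ((2 : ℝ) ^ (2 * (p + 1))) ^ 2 = 16 ^ (p + 1) := by
      rw [← pow_mul, show 2 * (p + 1) * 2 = 4 * (p + 1) by ring, pow_mul]; norm_num
    rw [show 2 * (p + 1) - 1 = 2 * p + 1 by omega, show 2 * (p + 1) / 2 = p + 1 by omega,
      div_pow, mul_div_assoc', le_div_iff₀ (by positivity), h16]
    rw [hchoose] at hwallis
    push_cast at hwallis ⊢
    nlinarith [mul_le_mul_of_nonneg_left hwallis (sq_nonneg ((p : ℝ) + 1))]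
  · have hwallis := two_mul_sixteen_pow_le_pi_mul_centralBinom_sq m
    have h16 : ((2 : ℝ) ^ (2 * m + 1)) ^ 2 = 4 * 16 ^ m := by
      rw [← pow_mul, show (2 * m + 1) * 2 = 2 + 4 * m by ring, pow_add, pow_mul]; norm_num
    rw [Nat.add_sub_cancel, show (2 * m + 1) / 2 = m by omega,
      ← Nat.centralBinom_eq_two_mul_choose, div_pow, mul_div_assoc',
      le_div_iff₀ (by positivity), h16]
    push_cast at hwallis ⊢
    nlinarith [mul_le_mul_of_nonneg_left hwallis (sq_nonneg (2 * (m : ℝ) + 1)),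
      mul_nonneg pi_pos.le (sq_nonneg ((2 * (m : ℝ) + 1) * m.centralBinom))]

theorem sqrt_div_sub_one_div_le_of_sq_le {T E : ℝ} (hT : 1 ≤ T) (hE : 0 ≤ E)
    (h : T ^ 2 ≤ 2 * π * (T + 1) * E ^ 2) :
    √(T / (2 * π)) - 1 / (2 * √(2 * π * T)) ≤ E := by
  set s := √(2 * π * T)
  have hs : 0 < s := Real.sqrt_pos.2 (by positivity)
  have hs2 : s ^ 2 = 2 * π * T := Real.sq_sqrt (by positivity)
  have hsqrt : √(T / (2 * π)) = T / s := by
    rw [← Real.sqrt_sq (by positivity : 0 ≤ T / s), div_pow, hs2]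
    congr 1
    field_simp
  rw [hsqrt, show T / s - 1 / (2 * s) = (2 * T - 1) / (2 * s) by field_simp,
    div_le_iff₀ (by positivity)]
  have hcubic : (T + 1) * (2 * T - 1) ^ 2 ≤ (T + 1) * (E * (2 * s)) ^ 2 := by
    have : (E * (2 * s)) ^ 2 = 4 * E ^ 2 * s ^ 2 := by ring
    rw [this, hs2]
    nlinarith [mul_le_mul_of_nonneg_left h (show 0 ≤ 4 * T by linarith)]
  exact le_of_sq_le_sq (le_of_mul_le_mul_left hcubic (by linarith)) (by positivity)

/-- For `Z ~ Binomial(T, 1/2)` with `T` any positive integer,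
`E|Z - T/2| ≥ √(T/(2π)) - 1/(2√(2πT))`. -/
theorem stmt_8 (T : ℕ) (hT : 0 < T) :
    ∑ k ∈ Finset.range (T + 1),
        ((T.choose k : ℝ) / 2 ^ T) * |(k : ℝ) - (T : ℝ) / 2|
      ≥ Real.sqrt ((T : ℝ) / (2 * π)) - 1 / (2 * Real.sqrt (2 * π * T)) := by
  rw [ge_iff_le, sum_choose_div_mul_abs_sub_half]
  exact sqrt_div_sub_one_div_le_of_sq_le (by exact_mod_cast hT) (by positivity)
    (sq_le_two_pi_mul_succ_mul_sq_mul_choose_half T)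
end

section
/- Suppose T balls are thrown independently and uniformly at random into 2 bins, and let H = max(Z, T - Z) where Z is the number of balls in the first bin. Then E[H] ≥ T/2 + sqrt(T/(2π)) - 1/(2 sqrt(2πT)) whenever T ≥ 1. -/
/-!
Splitting `max(k, T - k) = (T - k) + max(2k - T, 0)`, the first part sums to `T 2^(T-1)`, and
the second telescopes through `C(T,k)(2k - T) = T (C(T-1,k-1) - C(T-1,k))` down to
`T C(T-1, ⌊T/2⌋)`. So `E[H] = T/2 + T C(T-1, ⌊T/2⌋) / 2^T`, where the excess term is
`m C(2m,m)/4^m` for `T = 2m` and `(2m+1)/2 · C(2m,m)/4^m` for `T = 2m+1`.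
Wallis' inequality `W_m ≤ π/2` reads `C(2m,m)/4^m ≥ √(2/(π(2m+1)))`, and the claimed bound
equals `(T - 1/2)/√(2πT)`; after squaring, both parities reduce to polynomial inequalities.
-/

open Finset Real

open Nat in
lemma Nat.centralBinom_mul_factorial_sq (m : ℕ) : centralBinom m * m ! ^ 2 = (2 * m)! := by
  rw [centralBinom_eq_two_mul_choose, sq, ← mul_assoc]
  simpa [two_mul] using choose_mul_factorial_mul_factorial (Nat.le_add_right m m)

lemma Nat.centralBinom_succ_eq_two_mul_choose (m : ℕ) :
    (m + 1).centralBinom = 2 * (2 * m + 1).choose (m + 1) := by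
  rw [Nat.centralBinom_eq_two_mul_choose, Nat.mul_succ, Nat.choose_succ_succ,
    ← Nat.choose_symm_half, Nat.succ_eq_add_one]
  omega

open Nat in
lemma Real.Wallis.W_eq_four_pow_div_centralBinom_sq (m : ℕ) :
    Real.Wallis.W m = ((4 : ℝ) ^ m / centralBinom m) ^ 2 / (2 * m + 1) := by
  rw [Real.Wallis.W_eq_factorial_ratio, ← centralBinom_mul_factorial_sq]
  have : (centralBinom m : ℝ) ≠ 0 := by exact_mod_cast (centralBinom_pos m).ne'
  have : (m ! : ℝ) ≠ 0 := by exact_mod_cast (factorial_pos m).ne'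
  rw [show (4 : ℝ) ^ m = 2 ^ (2 * m) by rw [pow_mul]; norm_num]
  push_cast
  field_simp
  ring

lemma two_le_pi_mul_sq_centralBinom_div_four_pow (m : ℕ) :
    2 ≤ π * (2 * m + 1) * ((m.centralBinom : ℝ) / 4 ^ m) ^ 2 := by
  have hW := Real.Wallis.W_le m
  rw [Real.Wallis.W_eq_four_pow_div_centralBinom_sq] at hW
  have : (m.centralBinom : ℝ) ≠ 0 := by exact_mod_cast (m.centralBinom_pos).ne'
  rw [div_le_div_iff₀ (by positivity) two_pos, div_pow, div_mul_eq_mul_div,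
    div_le_iff₀ (by positivity)] at hW
  rw [div_pow, mul_div_assoc', le_div_iff₀ (by positivity)]
  linarith

lemma choose_succ_mul_sub (n k : ℕ) (hk : k ≤ n + 1) :
    ((n + 1).choose k : ℝ) * (n + 1 - k) = (n + 1) * n.choose k := by
  have h := congrArg (Nat.cast (R := ℝ)) (Nat.choose_mul_succ_eq n k)
  push_cast [Nat.cast_sub hk] at h
  linarith

lemma sum_choose_mul_sub (n : ℕ) :
    ∑ k ∈ range (n + 2), ((n + 1).choose k : ℝ) * (n + 1 - k) = (n + 1) * 2 ^ n := by
  rw [sum_congr rfl fun k hk => choose_succ_mul_sub n k (Nat.lt_succ_iff.mp (mem_range.mp hk)),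
    ← mul_sum, sum_range_succ, Nat.choose_succ_self, Nat.cast_zero, add_zero]
  exact_mod_cast congrArg ((n + 1) * ·) (Nat.sum_range_choose n)

/-- Clamping the index at `⌊(n+1)/2⌋` extends the telescoping identity to the terms below the
median, where both sides vanish. -/
lemma choose_succ_succ_mul_max (n k : ℕ) (hk : k ≤ n) :
    ((n + 1).choose (k + 1) : ℝ) * max (2 * ((k : ℝ) + 1) - (n + 1)) 0
      = (n + 1) * (n.choose (max k ((n + 1) / 2)) - n.choose (max (k + 1) ((n + 1) / 2))) := by
  rcases lt_or_ge k ((n + 1) / 2) with hkm | hkm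
  · have h2k : (2 * (k + 1) : ℝ) ≤ n + 1 := by exact_mod_cast (by omega : 2 * (k + 1) ≤ n + 1)
    rw [max_eq_right (by linarith), max_eq_right hkm.le, max_eq_right hkm]
    ring
  · have h2k : (n : ℝ) + 1 ≤ 2 * (k + 1) := by exact_mod_cast (by omega : n + 1 ≤ 2 * (k + 1))
    rw [max_eq_left (by linarith), max_eq_left hkm, max_eq_left (by omega)]
    have hlow := congrArg (Nat.cast (R := ℝ)) (Nat.add_one_mul_choose_eq n k)
    have hup := choose_succ_mul_sub n (k + 1) (by omega)
    push_cast at hlow hup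
    linear_combination -hlow - hup

lemma sum_choose_mul_max_sub (n : ℕ) :
    ∑ k ∈ range (n + 2), ((n + 1).choose k : ℝ) * max (2 * (k : ℝ) - (n + 1)) 0
      = (n + 1) * n.choose ((n + 1) / 2) := by
  rw [sum_range_succ']
  simp only [Nat.cast_add, Nat.cast_one]
  rw [sum_congr rfl fun k hk => choose_succ_succ_mul_max n k (Nat.lt_succ_iff.mp (mem_range.mp hk)),
    ← mul_sum, sum_range_sub' fun i => (n.choose (max i ((n + 1) / 2)) : ℝ),
    max_eq_left (by omega : (n + 1) / 2 ≤ n + 1), Nat.choose_succ_self]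
  simp only [Nat.cast_zero, mul_zero, zero_sub, Nat.choose_zero_right, Nat.zero_max,
    max_eq_right (neg_nonpos.mpr (by positivity : (0 : ℝ) ≤ n + 1))]
  ring

lemma sum_choose_mul_max (n : ℕ) :
    ∑ k ∈ range (n + 2), ((n + 1).choose k : ℝ) * max (k : ℝ) (n + 1 - k)
      = (n + 1) * 2 ^ n + (n + 1) * n.choose ((n + 1) / 2) := by
  have hsplit (k : ℝ) : max k (n + 1 - k) = (n + 1 - k) + max (2 * k - (n + 1)) 0 := by
    rw [← max_add_add_left]
    congr 1 <;> ring
  simp only [hsplit, mul_add, sum_add_distrib, sum_choose_mul_sub, sum_choose_mul_max_sub]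

lemma sq_sub_half_le_of_odd (m : ℕ) :
    ((2 * m + 1 : ℝ) - 1 / 2) ^ 2
      ≤ 2 * π * (2 * m + 1) * ((2 * m + 1) * (2 * m).choose m / 2 ^ (2 * m + 1)) ^ 2 := by
  have hW := two_le_pi_mul_sq_centralBinom_div_four_pow m
  have hr : ((2 * m + 1 : ℝ) * (2 * m).choose m / 2 ^ (2 * m + 1))
      = (2 * m + 1) / 2 * (m.centralBinom / 4 ^ m) := by
    rw [Nat.centralBinom_eq_two_mul_choose, pow_succ, pow_mul]
    norm_num
    ring
  rw [hr]
  nlinarith [mul_le_mul_of_nonneg_left hW (sq_nonneg (2 * m + 1 : ℝ))]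

lemma sq_sub_half_le_of_even (m : ℕ) :
    ((2 * m + 2 : ℝ) - 1 / 2) ^ 2
      ≤ 2 * π * (2 * m + 2) * ((2 * m + 2) * (2 * m + 1).choose (m + 1) / 2 ^ (2 * m + 2)) ^ 2 := by
  have hW := two_le_pi_mul_sq_centralBinom_div_four_pow (m + 1)
  have hr : ((2 * m + 2 : ℝ) * (2 * m + 1).choose (m + 1) / 2 ^ (2 * m + 2))
      = (m + 1) * ((m + 1).centralBinom / 4 ^ (m + 1)) := by
    rw [Nat.centralBinom_succ_eq_two_mul_choose, show 2 * m + 2 = 2 * (m + 1) by ring, pow_mul]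
    norm_num
    ring
  rw [hr]
  push_cast at hW
  have hm : (0 : ℝ) ≤ m := m.cast_nonneg
  refine le_of_mul_le_mul_right ?_ (by positivity : (0 : ℝ) < 2 * (m + 1) + 1)
  nlinarith [mul_le_mul_of_nonneg_left hW (by positivity : (0 : ℝ) ≤ 4 * (m + 1) ^ 3)]

lemma div_sqrt_le_of_sq_le {a b x : ℝ} (hb : 0 ≤ b) (h : a ^ 2 ≤ x * b ^ 2) :
    a / √x ≤ b := by
  rcases (sqrt_nonneg x).eq_or_lt with h0 | hpos
  · simp [← h0, hb]
  rw [div_le_iff₀ hpos]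
  calc a ≤ √(a ^ 2) := (sqrt_sq_eq_abs a).symm ▸ le_abs_self a
    _ ≤ √(x * b ^ 2) := sqrt_le_sqrt h
    _ = b * √x := by rw [sqrt_mul' x (sq_nonneg b), sqrt_sq hb, mul_comm]

lemma sub_half_div_sqrt_le (n : ℕ) :
    ((n : ℝ) + 1 - 1 / 2) / √(2 * π * (n + 1))
      ≤ (n + 1) * n.choose ((n + 1) / 2) / 2 ^ (n + 1) := by
  apply div_sqrt_le_of_sq_le (by positivity)
  obtain ⟨m, rfl | rfl⟩ := n.even_or_odd'
  · rw [show (2 * m + 1) / 2 = m by omega]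
    push_cast
    exact sq_sub_half_le_of_odd m
  · rw [show (2 * m + 1 + 1) / 2 = m + 1 by omega]
    convert sq_sub_half_le_of_even m using 3 <;> push_cast <;> ring

lemma sqrt_div_two_pi_sub_inv_sqrt {x : ℝ} (hx : 0 < x) :
    √(x / (2 * π)) - 1 / (2 * √(2 * π * x)) = (x - 1 / 2) / √(2 * π * x) := by
  have hs : 0 < √(2 * π * x) := sqrt_pos.mpr (by positivity)
  have hx' : √(x / (2 * π)) = x / √(2 * π * x) := by
    rw [eq_div_iff hs.ne', ← sqrt_mul (by positivity),
      show x / (2 * π) * (2 * π * x) = x ^ 2 by field_simp, sqrt_sq hx.le]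
  rw [hx']
  field_simp

/-- `T` balls thrown uniformly at random into 2 bins; `Z ~ Binomial(T, 1/2)` is the
load of the first bin and `H = max(Z, T - Z)` the load of the more populated bin.
Then `E[H] ≥ T/2 + √(T/(2π)) - 1/(2√(2πT))` for `T ≥ 1`. -/
theorem stmt_13 (T : ℕ) (hT : 1 ≤ T) :
    ∑ k ∈ Finset.range (T + 1),
        ((T.choose k : ℝ) / 2 ^ T) * max (k : ℝ) ((T : ℝ) - k)
      ≥ (T : ℝ) / 2 + Real.sqrt ((T : ℝ) / (2 * π))
          - 1 / (2 * Real.sqrt (2 * π * T)) := by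
  obtain ⟨n, rfl⟩ := Nat.exists_eq_add_of_le' hT
  have hmean : ∑ k ∈ range (n + 1 + 1),
      ((n + 1).choose k : ℝ) / 2 ^ (n + 1) * max (k : ℝ) ((n + 1 : ℕ) - k)
      = ((n : ℝ) + 1) / 2 + (n + 1) * n.choose ((n + 1) / 2) / 2 ^ (n + 1) := by
    simp only [div_mul_eq_mul_div, ← sum_div, Nat.cast_add, Nat.cast_one, sum_choose_mul_max]
    field_simp
    ring
  rw [ge_iff_le, hmean, add_sub_assoc, sqrt_div_two_pi_sub_inv_sqrt (by positivity)]
  push_cast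
  linarith [sub_half_div_sqrt_le n]
end
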